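/- arXiv:2602.01480 — 2 statements merged into one kernel-verified Lean document; each statement's English description precedes it below -/
import Mathlib

section
/- If Σ: [0,∞) → ℝ solves dΣ/dt = f(Σ) with f(Σ) = (η²S²/2 - 2)Σ - η²SQΣ² + (η²Q²/2)Σ³, η, S, Q > 0, S > 2/η, and the initial condition satisfies 0 < Σ(0) < S/Q + 2/(ηQ), then Σ(t) remains in the open interval (0, S/Q + 2/(ηQ)) for all t ≥ 0 and converges to Σ*₋ = S/Q - 2/(ηQ) as t → ∞. -/
/-!
The cubic factors as `η²Q²/2 · Σ (Σ - Σ*₋) (Σ - Σ*₊)`, so `0`, `Σ*₋`, `Σ*₊` are equilibria,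
with `f > 0` on `(0, Σ*₋)` and `f < 0` on `(Σ*₋, Σ*₊)`. Since `f` is locally Lipschitz,
uniqueness of solutions (forwards and backwards in time) forbids a non-constant solution from
ever reaching an equilibrium, so by the intermediate value theorem it stays between the
equilibria that bracket its initial value. There `f` has a fixed sign, so the solution is
monotone and bounded, hence converges, and its limit must be a zero of `f` (the mean value
theorem makes the velocity tend to both `f L` and `0`); the only candidate is `Σ*₋`. The case
above `Σ*₋` is the case below it for the reflected flow `x ↦ -f (-x)`.
-/

open Set Filter Topology

lemma LocallyLipschitz.neg_comp_neg {E F : Type*} [SeminormedAddCommGroup E]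
    [SeminormedAddCommGroup F] {f : E → F} (hf : LocallyLipschitz f) :
    LocallyLipschitz fun x => -f (-x) :=
  LipschitzWith.id.neg.locallyLipschitz.comp (hf.comp LipschitzWith.id.neg.locallyLipschitz)

lemma MonotoneOn.exists_tendsto_atTop_of_le {ι α : Type*} [Preorder ι] [IsDirectedOrder ι]
    [ConditionallyCompleteLinearOrder α] [TopologicalSpace α] [OrderTopology α] {g : ι → α}
    {a : ι} {M : α} (hg : MonotoneOn g (Ici a)) (hM : ∀ t ∈ Ici a, g t ≤ M) :
    ∃ L ∈ Icc (g a) M, Tendsto g atTop (𝓝 L) := by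
  have : Nonempty ι := ⟨a⟩
  have hmono : Monotone fun t : Ici a => g t := fun s t hst => hg s.2 t.2 hst
  have hbdd : BddAbove (range fun t : Ici a => g t) :=
    ⟨M, by rintro _ ⟨t, rfl⟩; exact hM t t.2⟩
  have hlim : Tendsto g atTop (𝓝 (⨆ t : Ici a, g t)) :=
    tendsto_comp_val_Ici_atTop.1 (tendsto_atTop_ciSup hmono hbdd)
  refine ⟨_, ⟨ge_of_tendsto hlim ?_, le_of_tendsto hlim ?_⟩, hlim⟩
  · filter_upwards [eventually_ge_atTop a] with t ht using hg self_mem_Ici ht ht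
  · filter_upwards [eventually_ge_atTop a] with t ht using hM t ht

lemma mul_sub_mul_sub_pos {a b x : ℝ} (hx : x ∈ Ioo 0 a) (hab : a ≤ b) :
    0 < x * (x - a) * (x - b) :=
  mul_pos_of_neg_of_neg (mul_neg_of_pos_of_neg hx.1 (by linarith [hx.2])) (by linarith [hx.2])

lemma mul_sub_mul_sub_neg {a b x : ℝ} (ha : 0 ≤ a) (hx : x ∈ Ioo a b) :
    x * (x - a) * (x - b) < 0 :=
  mul_neg_of_pos_of_neg (mul_pos (by linarith [hx.1]) (by linarith [hx.1])) (by linarith [hx.2])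

lemma rodFlow_factor {η S Q : ℝ} (hη : η ≠ 0) (hQ : Q ≠ 0) (x : ℝ) :
    (η ^ 2 * S ^ 2 / 2 - 2) * x - η ^ 2 * S * Q * x ^ 2 + η ^ 2 * Q ^ 2 / 2 * x ^ 3 =
      η ^ 2 * Q ^ 2 / 2 * (x * (x - (S / Q - 2 / (η * Q))) * (x - (S / Q + 2 / (η * Q)))) := by
  field_simp
  ring

def IsForwardSolution (f γ : ℝ → ℝ) : Prop :=
  ∀ t ∈ Ici (0 : ℝ), HasDerivWithinAt γ (f (γ t)) (Ici 0) t

namespace IsForwardSolution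

variable {f γ : ℝ → ℝ} {c t : ℝ}

theorem continuousOn (h : IsForwardSolution f γ) : ContinuousOn γ (Ici 0) :=
  fun t ht => (h t ht).continuousWithinAt

theorem hasDerivAt (h : IsForwardSolution f γ) (ht : 0 < t) : HasDerivAt γ (f (γ t)) t :=
  (h t ht.le).hasDerivAt (Ici_mem_nhds ht)

theorem neg (h : IsForwardSolution f γ) : IsForwardSolution (fun x => -f (-x)) fun t => -γ t :=
  fun t ht => by simp only [neg_neg]; exact (h t ht).neg

theorem exists_lipschitzOnWith (h : IsForwardSolution f γ) (hf : LocallyLipschitz f) (T : ℝ) :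
    ∃ K, LipschitzOnWith K f (γ '' Icc 0 T) :=
  hf.locallyLipschitzOn.exists_lipschitzOnWith_of_compact
    (isCompact_Icc.image_of_continuousOn (h.continuousOn.mono Icc_subset_Ici_self))

theorem apply_zero_eq_of_apply_eq (h : IsForwardSolution f γ) (hf : LocallyLipschitz f)
    (hc : f c = 0) (ht : 0 ≤ t) (hγ : γ t = c) : γ 0 = c := by
  obtain ⟨K, hK⟩ := h.exists_lipschitzOnWith hf t
  refine ODE_solution_unique_of_mem_Icc_left (v := fun _ => f) (s := fun _ => γ '' Icc 0 t)
    (fun _ _ => hK) (h.continuousOn.mono Icc_subset_Ici_self)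
    (fun s hs => (h.hasDerivAt hs.1).hasDerivWithinAt)
    (fun s hs => mem_image_of_mem _ (Ioc_subset_Icc_self hs)) continuousOn_const
    (fun s _ => by simpa [hc] using hasDerivWithinAt_const s _ c)
    (fun _ _ => ⟨t, right_mem_Icc.2 ht, hγ⟩) hγ (left_mem_Icc.2 ht)

theorem apply_eq_of_apply_zero_eq (h : IsForwardSolution f γ) (hf : LocallyLipschitz f)
    (hc : f c = 0) (h0 : γ 0 = c) (ht : 0 ≤ t) : γ t = c := by
  obtain ⟨K, hK⟩ := h.exists_lipschitzOnWith hf t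
  refine ODE_solution_unique_of_mem_Icc_right (v := fun _ => f) (s := fun _ => γ '' Icc 0 t)
    (fun _ _ => hK) (h.continuousOn.mono Icc_subset_Ici_self)
    (fun s hs => (h s hs.1).mono (Ici_subset_Ici.2 hs.1))
    (fun s hs => mem_image_of_mem _ (Ico_subset_Icc_self hs)) continuousOn_const
    (fun s _ => by simpa [hc] using hasDerivWithinAt_const s _ c)
    (fun _ _ => ⟨0, left_mem_Icc.2 ht, h0⟩) h0 (right_mem_Icc.2 ht)

theorem apply_lt_of_apply_zero_lt (h : IsForwardSolution f γ) (hf : LocallyLipschitz f)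
    (hc : f c = 0) (h0 : γ 0 < c) (ht : 0 ≤ t) : γ t < c := by
  by_contra! hle
  obtain ⟨s, hs, hsc⟩ :=
    intermediate_value_Icc ht (h.continuousOn.mono Icc_subset_Ici_self) ⟨h0.le, hle⟩
  exact h0.ne (h.apply_zero_eq_of_apply_eq hf hc hs.1 hsc)

theorem lt_apply_of_lt_apply_zero (h : IsForwardSolution f γ) (hf : LocallyLipschitz f)
    (hc : f c = 0) (h0 : c < γ 0) (ht : 0 ≤ t) : c < γ t :=
  neg_lt_neg_iff.1 <|
    h.neg.apply_lt_of_apply_zero_lt hf.neg_comp_neg (c := -c) (by simp [hc]) (neg_lt_neg h0) ht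

theorem eq_zero_of_tendsto (h : IsForwardSolution f γ) (hf : Continuous f) {L : ℝ}
    (hL : Tendsto γ atTop (𝓝 L)) : f L = 0 := by
  have hslope : ∀ n : ℕ, ∃ ξ ∈ Ioo ((n : ℝ) + 1) (n + 2),
      f (γ ξ) = γ (n + 2) - γ (n + 1) := by
    intro n
    obtain ⟨ξ, hξ, hd⟩ := exists_hasDerivAt_eq_slope γ (fun s => f (γ s))
      (a := (n : ℝ) + 1) (b := n + 2) (by linarith)
      (h.continuousOn.mono fun s hs => le_trans (by positivity) hs.1)
      (fun s hs => h.hasDerivAt (lt_trans (by positivity) hs.1))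
    exact ⟨ξ, hξ, by rw [hd]; ring⟩
  choose ξ hξ hξf using hslope
  have hn : Tendsto (fun n : ℕ => (n : ℝ)) atTop atTop := tendsto_natCast_atTop_atTop
  have hξ_lim : Tendsto ξ atTop atTop := tendsto_atTop_mono (fun n => by linarith [(hξ n).1]) hn
  have hlhs : Tendsto (fun n => f (γ (ξ n))) atTop (𝓝 (f L)) :=
    hf.continuousAt.tendsto.comp (hL.comp hξ_lim)
  have hrhs : Tendsto (fun n : ℕ => γ (n + 2) - γ (n + 1)) atTop (𝓝 (L - L)) :=
    (hL.comp (tendsto_atTop_add_const_right _ 2 hn)).sub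
      (hL.comp (tendsto_atTop_add_const_right _ 1 hn))
  rw [← sub_self L]
  exact tendsto_nhds_unique (hlhs.congr hξf) hrhs

theorem tendsto_of_mem_Ioc_of_pos (h : IsForwardSolution f γ) (hf : LocallyLipschitz f)
    {lo : ℝ} (hlo : f lo = 0) (hc : f c = 0) (h0 : γ 0 ∈ Ioc lo c)
    (hpos : ∀ x ∈ Ioo lo c, 0 < f x) : Tendsto γ atTop (𝓝 c) := by
  rcases h0.2.eq_or_lt with h0c | h0c
  · refine tendsto_const_nhds.congr' ?_
    filter_upwards [eventually_ge_atTop 0] with t ht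
    exact (h.apply_eq_of_apply_zero_eq hf hc h0c ht).symm
  have hmem : ∀ t ∈ Ici (0 : ℝ), γ t ∈ Ioo lo c := fun t ht =>
    ⟨h.lt_apply_of_lt_apply_zero hf hlo h0.1 ht, h.apply_lt_of_apply_zero_lt hf hc h0c ht⟩
  have hmono : MonotoneOn γ (Ici 0) := by
    refine monotoneOn_of_hasDerivWithinAt_nonneg (convex_Ici 0) h.continuousOn
      (fun t ht => ?_) (fun t ht => (hpos _ (hmem t (interior_subset ht))).le)
    rw [interior_Ici] at ht ⊢
    exact (h.hasDerivAt ht).hasDerivWithinAt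
  obtain ⟨L, hL, hlim⟩ := hmono.exists_tendsto_atTop_of_le fun t ht => (hmem t ht).2.le
  obtain rfl : L = c := by
    by_contra hne
    exact (hpos L ⟨h0.1.trans_le hL.1, hL.2.lt_of_ne hne⟩).ne'
      (h.eq_zero_of_tendsto hf.continuous hlim)
  exact hlim

theorem tendsto_of_mem_Ico_of_neg (h : IsForwardSolution f γ) (hf : LocallyLipschitz f)
    {hi : ℝ} (hc : f c = 0) (hhi : f hi = 0) (h0 : γ 0 ∈ Ico c hi)
    (hneg : ∀ x ∈ Ioo c hi, f x < 0) : Tendsto γ atTop (𝓝 c) := by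
  have := h.neg.tendsto_of_mem_Ioc_of_pos hf.neg_comp_neg (lo := -hi) (c := -c)
    (by simp [hhi]) (by simp [hc]) ⟨neg_lt_neg h0.2, neg_le_neg h0.1⟩
    (fun x hx => neg_pos.2 (hneg (-x) ⟨lt_neg.1 hx.2, neg_lt.1 hx.1⟩))
  simpa using this.neg

end IsForwardSolution

theorem stmt_15_general (S η Q : ℝ) (hη : 0 < η) (hQ : 0 < Q)
    (hEoS : 2 / η < S)
    (f : ℝ → ℝ)
    (hf : ∀ x, f x = (η ^ 2 * S ^ 2 / 2 - 2) * x - η ^ 2 * S * Q * x ^ 2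
      + η ^ 2 * Q ^ 2 / 2 * x ^ 3)
    (Sig : ℝ → ℝ)
    (hODE : ∀ t ∈ Set.Ici (0 : ℝ), HasDerivWithinAt Sig (f (Sig t)) (Set.Ici 0) t)
    (h0 : 0 < Sig 0) (h0' : Sig 0 < S / Q + 2 / (η * Q)) :
    (∀ t ∈ Set.Ici (0 : ℝ), Sig t ∈ Set.Ioo 0 (S / Q + 2 / (η * Q))) ∧
    Filter.Tendsto Sig Filter.atTop (nhds (S / Q - 2 / (η * Q))) := by
  have hSig : IsForwardSolution f Sig := hODE
  have hlip : LocallyLipschitz f :=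
    (by rw [funext hf]; fun_prop : ContDiff ℝ 1 f).locallyLipschitz
  have hfab := fun x => (hf x).trans (rodFlow_factor hη.ne' hQ.ne' x)
  set a := S / Q - 2 / (η * Q)
  set b := S / Q + 2 / (η * Q)
  have ha : 0 < a := by
    rw [div_lt_iff₀ hη] at hEoS
    rw [sub_pos, div_lt_div_iff₀ (by positivity) hQ]
    nlinarith
  have hab : a < b := by linarith [show 0 < 2 / (η * Q) by positivity]
  have hk : 0 < η ^ 2 * Q ^ 2 / 2 := by positivity
  have hf0 : f 0 = 0 := by simp [hfab]
  have hfa : f a = 0 := by simp [hfab]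
  have hfb : f b = 0 := by simp [hfab]
  refine ⟨fun t ht => ⟨hSig.lt_apply_of_lt_apply_zero hlip hf0 h0 ht,
    hSig.apply_lt_of_apply_zero_lt hlip hfb h0' ht⟩, ?_⟩
  rcases le_total (Sig 0) a with h | h
  · exact hSig.tendsto_of_mem_Ioc_of_pos hlip hf0 hfa ⟨h0, h⟩ fun x hx => by
      rw [hfab]; exact mul_pos hk (mul_sub_mul_sub_pos hx hab.le)
  · exact hSig.tendsto_of_mem_Ico_of_neg hlip hfa hfb ⟨h, h0'⟩ fun x hx => by
      rw [hfab]; exact mul_neg_of_pos_of_neg hk (mul_sub_mul_sub_neg ha.le hx)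

/-- Phase-line analysis of the Rod Flow cubic on the quartic potential: solutions
started in `(0, Sig*₊)` stay there and converge to `Sig*₋ = S/Q - 2/(ηQ)`. -/
theorem stmt_15 (S η Q : ℝ) (hS : 0 < S) (hη : 0 < η) (hQ : 0 < Q)
    (hEoS : 2 / η < S)
    (f : ℝ → ℝ)
    (hf : ∀ x, f x = (η ^ 2 * S ^ 2 / 2 - 2) * x - η ^ 2 * S * Q * x ^ 2
      + η ^ 2 * Q ^ 2 / 2 * x ^ 3)
    (Sig : ℝ → ℝ)
    (hODE : ∀ t ∈ Set.Ici (0 : ℝ), HasDerivWithinAt Sig (f (Sig t)) (Set.Ici 0) t)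
    (h0 : 0 < Sig 0) (h0' : Sig 0 < S / Q + 2 / (η * Q)) :
    (∀ t ∈ Set.Ici (0 : ℝ), Sig t ∈ Set.Ioo 0 (S / Q + 2 / (η * Q))) ∧
    Filter.Tendsto Sig Filter.atTop (nhds (S / Q - 2 / (η * Q))) :=
  stmt_15_general S η Q hη hQ hEoS f hf Sig hODE h0 h0'
end

section
/- Let V: ℝ^p → ℝ^p be twice continuously differentiable and let x(t) solve the modified ODE ẋ = V(x) - (1/2)DV(x)·V(x). Then x(t+1) = x(t) + V(x(t)) + O(‖V‖³) in the sense that, if V is replaced by εV, the one-step error x(t+1) - x(t) - εV(x(t)) is O(ε³) as ε → 0 (for fixed x(t)). -/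
/-!
Write `W = DV·V`. Near `x₀` the modified field of `εV` has size `O(ε)`, and a curve whose speed
stays below the radius of a ball on which this holds cannot leave the ball before time `1`; hence
`x ε t - x₀ = O(ε)` uniformly in `t ∈ [0, 1]`. Differentiating in `t`,

  `d/dt [V (x ε t) - ε t W x₀] = ε (W (x ε t) - W x₀) - (ε²/2) DV (x ε t) (W (x ε t)) = O(ε²)`,

  `d/dt [x ε t - ε t V x₀ - (ε²/2) (t² - t) W x₀]`
    `= ε (V (x ε t) - V x₀ - ε t W x₀) - (ε²/2) (W (x ε t) - W x₀) = O(ε³)`.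

The mean value inequality integrates both bounds over `[0, 1]`, and at `t = 1` the quadratic
correction vanishes.

Bounds uniform in `t ∈ [0, 1]` are big-O statements along the filter `𝓝 0 ×ˢ 𝓟 (Icc 0 1)` on
pairs `(ε, t)`.
-/

open Set Filter Topology Asymptotics Metric

theorem isBigO_div_const_self {α : Type*} {l : Filter α} (f : α → ℝ) (c : ℝ) :
    (fun a => f a / c) =O[l] f :=
  (isBigO_const_mul_self c⁻¹ f l).congr_left fun _ => inv_mul_eq_div _ _

section

variable {E : Type*} [NormedAddCommGroup E] [NormedSpace ℝ E]

theorem norm_sub_le_mul_of_norm_deriv_le_on_closedBall {γ γ' : ℝ → E} {r C : ℝ}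
    (hγ : ∀ t, HasDerivAt γ (γ' t) t) (hC : 0 ≤ C) (hCr : C < r)
    (hbound : ∀ t, γ t ∈ closedBall (γ 0) r → ‖γ' t‖ ≤ C) :
    ∀ t ∈ Icc (0 : ℝ) 1, ‖γ t - γ 0‖ ≤ C * t := by
  intro t ht
  -- For every `D ∈ (C, r)` the sphere of radius `D s` around `γ 0` is never reached from
  -- inside, since there the speed is at most `C < D`; then let `D` decrease to `C`.
  have hD : ∀ D ∈ Ioo C r, ‖γ t - γ 0‖ ≤ D * t := by
    rintro D ⟨hCD, hDr⟩
    refine image_norm_le_of_norm_deriv_right_lt_deriv_boundary' (f := fun s => γ s - γ 0)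
      (B := fun s => D * s) (B' := fun _ => D)
      (fun s _ => ((hγ s).continuousAt.sub continuousAt_const).continuousWithinAt)
      (fun s _ => ((hγ s).sub_const (γ 0)).hasDerivWithinAt) (by simp)
      (continuous_const_mul D).continuousOn
      (fun s _ => ((hasDerivAt_id s).const_mul D).hasDerivWithinAt.congr_deriv (mul_one D))
      (fun s hs hγs => (hbound s ?_).trans_lt hCD) ht
    rw [mem_closedBall, dist_eq_norm, hγs]
    nlinarith [hs.1, hs.2]
  exact ge_of_tendsto ((continuous_mul_const t).tendsto' C _ rfl |>.mono_left nhdsWithin_le_nhds)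
    (eventually_of_mem (Ioo_mem_nhdsGT hCr) hD)

theorem isBigO_sub_of_hasDerivAt_isBigO {α : Type*} {l : Filter α} {F F' : α → ℝ → E}
    {g : α → ℝ} (hF : ∀ a t, HasDerivAt (F a) (F' a t) t)
    (hF' : (fun p : α × ℝ => F' p.1 p.2) =O[l ×ˢ 𝓟 (Icc 0 1)] fun p => g p.1) :
    (fun p : α × ℝ => F p.1 p.2 - F p.1 0) =O[l ×ˢ 𝓟 (Icc 0 1)] fun p => g p.1 := by
  obtain ⟨c, hc, hcF'⟩ := hF'.exists_pos
  refine IsBigO.of_bound c ?_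
  have hbound := hcF'.bound
  rw [eventually_prod_principal_iff] at hbound ⊢
  filter_upwards [hbound] with a ha t ht
  calc ‖F a t - F a 0‖ ≤ c * ‖g a‖ * (t - 0) :=
        norm_image_sub_le_of_norm_deriv_le_segment' (fun s _ => (hF a s).hasDerivWithinAt)
          (fun s hs => ha s (Ico_subset_Icc_self hs)) t ht
    _ ≤ c * ‖g a‖ := by
        rw [sub_zero]; exact mul_le_of_le_one_right (by positivity) ht.2

variable {V : E → E}

/-- The modified vector field `Ṽ = V - ½ DV·V` of the rescaled field `εV`. -/
noncomputable def modifiedField (V : E → E) (ε : ℝ) (y : E) : E :=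
  ε • V y - (ε ^ 2 / 2) • fderiv ℝ V y (V y)

theorem norm_modifiedField_le {ε : ℝ} (hε : |ε| ≤ 1) (y : E) :
    ‖modifiedField V ε y‖ ≤ |ε| * (‖V y‖ + ‖fderiv ℝ V y (V y)‖) := by
  have hε2 : |ε ^ 2 / 2| ≤ |ε| := by
    rw [abs_div, abs_pow, abs_two]
    nlinarith [abs_nonneg ε]
  calc ‖modifiedField V ε y‖
      ≤ ‖ε • V y‖ + ‖(ε ^ 2 / 2) • fderiv ℝ V y (V y)‖ := norm_sub_le _ _
    _ ≤ |ε| * ‖V y‖ + |ε| * ‖fderiv ℝ V y (V y)‖ := by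
        simp only [norm_smul, Real.norm_eq_abs]
        gcongr
    _ = |ε| * (‖V y‖ + ‖fderiv ℝ V y (V y)‖) := by ring

variable {x : ℝ → ℝ → E} {x₀ : E}

theorem isBigO_modifiedFlow_sub (hV : ContinuousAt V x₀)
    (hW : ContinuousAt (fun y => fderiv ℝ V y (V y)) x₀)
    (hflow : ∀ ε t, HasDerivAt (x ε) (modifiedField V ε (x ε t)) t) (hinit : ∀ ε, x ε 0 = x₀) :
    (fun p : ℝ × ℝ => x p.1 p.2 - x₀) =O[𝓝 0 ×ˢ 𝓟 (Icc 0 1)] Prod.fst := by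
  set M := ‖V x₀‖ + ‖fderiv ℝ V x₀ (V x₀)‖ + 1
  obtain ⟨r, hr0, hr⟩ := nhds_basis_closedBall.eventually_iff.1
    ((hV.norm.add hW.norm).eventually_lt_const (lt_add_one _))
  have hM : 0 ≤ M := by positivity
  have hsmall : ∀ᶠ ε : ℝ in 𝓝 0, |ε| ≤ 1 ∧ |ε| * M < r := by
    have habs : Tendsto (fun ε : ℝ => |ε|) (𝓝 0) (𝓝 0) := by
      simpa using continuous_abs.tendsto (0 : ℝ)
    exact (habs.eventually_le_const one_pos).and
      ((habs.mul_const M).eventually_lt_const (by simpa using hr0))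
  refine IsBigO.of_bound M ?_
  rw [eventually_prod_principal_iff]
  filter_upwards [hsmall] with ε ⟨hε1, hεr⟩ t ht
  have hflow_speed : ∀ s, x ε s ∈ closedBall (x ε 0) r → ‖modifiedField V ε (x ε s)‖ ≤ |ε| * M :=
    fun s hs => (norm_modifiedField_le hε1 _).trans <|
      mul_le_mul_of_nonneg_left (hr (hinit ε ▸ hs)).le (abs_nonneg ε)
  have hnear := norm_sub_le_mul_of_norm_deriv_le_on_closedBall (hflow ε) (by positivity) hεr
    hflow_speed t ht
  rw [hinit ε] at hnear
  calc ‖x ε t - x₀‖ ≤ |ε| * M * t := hnear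
    _ ≤ M * ‖ε‖ := by rw [Real.norm_eq_abs]; nlinarith [ht.2, mul_nonneg (abs_nonneg ε) hM]

theorem ContDiff.fderiv_apply_self {n : WithTop ℕ∞} (hV : ContDiff ℝ (n + 1) V) :
    ContDiff ℝ n fun y => fderiv ℝ V y (V y) :=
  (hV.fderiv_right le_rfl).clm_apply (hV.of_le le_self_add)

theorem tendsto_modifiedFlow (hV : ContinuousAt V x₀)
    (hW : ContinuousAt (fun y => fderiv ℝ V y (V y)) x₀)
    (hflow : ∀ ε t, HasDerivAt (x ε) (modifiedField V ε (x ε t)) t) (hinit : ∀ ε, x ε 0 = x₀) :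
    Tendsto (fun p : ℝ × ℝ => x p.1 p.2) (𝓝 0 ×ˢ 𝓟 (Icc 0 1)) (𝓝 x₀) :=
  tendsto_sub_nhds_zero_iff.1 <|
    (isBigO_modifiedFlow_sub hV hW hflow hinit).trans_tendsto tendsto_fst

theorem isBigO_apply_modifiedFlow_sub {F : Type*} [NormedAddCommGroup F] [NormedSpace ℝ F]
    {f : E → F} (hf : DifferentiableAt ℝ f x₀) (hV : ContinuousAt V x₀)
    (hW : ContinuousAt (fun y => fderiv ℝ V y (V y)) x₀)
    (hflow : ∀ ε t, HasDerivAt (x ε) (modifiedField V ε (x ε t)) t) (hinit : ∀ ε, x ε 0 = x₀) :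
    (fun p : ℝ × ℝ => f (x p.1 p.2) - f x₀) =O[𝓝 0 ×ˢ 𝓟 (Icc 0 1)] Prod.fst :=
  (hf.hasFDerivAt.isBigO_sub.comp_tendsto (tendsto_modifiedFlow hV hW hflow hinit)).trans
    (isBigO_modifiedFlow_sub hV hW hflow hinit)

theorem isBigO_apply_modifiedFlow_sub_linear (hV : ContDiff ℝ 2 V)
    (hflow : ∀ ε t, HasDerivAt (x ε) (modifiedField V ε (x ε t)) t) (hinit : ∀ ε, x ε 0 = x₀) :
    (fun p : ℝ × ℝ => V (x p.1 p.2) - V x₀ - (p.1 * p.2) • fderiv ℝ V x₀ (V x₀))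
      =O[𝓝 0 ×ˢ 𝓟 (Icc 0 1)] fun p => p.1 ^ 2 := by
  set W : E → E := fun y => fderiv ℝ V y (V y)
  have hW : ContDiff ℝ 1 W := ContDiff.fderiv_apply_self (n := 1) hV
  have hW_near : (fun p : ℝ × ℝ => W (x p.1 p.2) - W x₀) =O[𝓝 0 ×ˢ 𝓟 (Icc 0 1)] Prod.fst :=
    isBigO_apply_modifiedFlow_sub (hW.differentiable one_ne_zero x₀)
      hV.continuous.continuousAt hW.continuous.continuousAt hflow hinit
  have hDVW_bdd : (fun p : ℝ × ℝ => fderiv ℝ V (x p.1 p.2) (W (x p.1 p.2)))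
      =O[𝓝 0 ×ˢ 𝓟 (Icc 0 1)] fun _ => (1 : ℝ) :=
    (((hV.continuous_fderiv two_ne_zero).clm_apply hW.continuous).tendsto x₀ |>.comp
      (tendsto_modifiedFlow hV.continuous.continuousAt hW.continuous.continuousAt hflow hinit)
      ).isBigO_one ℝ
  have hderiv : ∀ ε t, HasDerivAt (fun s => V (x ε s) - (ε * s) • W x₀)
      (ε • (W (x ε t) - W x₀) - (ε ^ 2 / 2) • fderiv ℝ V (x ε t) (W (x ε t))) t := by
    intro ε t
    refine (((hV.differentiable two_ne_zero _).hasFDerivAt.comp_hasDerivAt t (hflow ε t)).sub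
      (((hasDerivAt_id t).const_mul ε).smul_const (W x₀))).congr_deriv ?_
    simp only [modifiedField, map_sub, map_smul, mul_one, W]
    module
  have hderiv_isBigO :
      (fun p : ℝ × ℝ => p.1 • (W (x p.1 p.2) - W x₀)
        - (p.1 ^ 2 / 2) • fderiv ℝ V (x p.1 p.2) (W (x p.1 p.2)))
      =O[𝓝 0 ×ˢ 𝓟 (Icc 0 1)] fun p => p.1 ^ 2 :=
    (((isBigO_refl _ _).smul hW_near).congr_right fun p => (sq p.1).symm).sub
      (((isBigO_div_const_self (fun p : ℝ × ℝ => p.1 ^ 2) 2).smul hDVW_bdd).congr_right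
        fun p => mul_one _)
  refine (isBigO_sub_of_hasDerivAt_isBigO (g := (· ^ 2)) hderiv hderiv_isBigO).congr_left
    fun p => ?_
  simp only [hinit, W]
  module

theorem isBigO_modifiedFlow_sub_quadratic (hV : ContDiff ℝ 2 V)
    (hflow : ∀ ε t, HasDerivAt (x ε) (modifiedField V ε (x ε t)) t) (hinit : ∀ ε, x ε 0 = x₀) :
    (fun p : ℝ × ℝ => x p.1 p.2 - x₀ - (p.1 * p.2) • V x₀
        - (p.1 ^ 2 / 2 * (p.2 ^ 2 - p.2)) • fderiv ℝ V x₀ (V x₀))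
      =O[𝓝 0 ×ˢ 𝓟 (Icc 0 1)] fun p => p.1 ^ 3 := by
  set W : E → E := fun y => fderiv ℝ V y (V y)
  have hW : ContDiff ℝ 1 W := ContDiff.fderiv_apply_self (n := 1) hV
  have hW_near : (fun p : ℝ × ℝ => W (x p.1 p.2) - W x₀) =O[𝓝 0 ×ˢ 𝓟 (Icc 0 1)] Prod.fst :=
    isBigO_apply_modifiedFlow_sub (hW.differentiable one_ne_zero x₀)
      hV.continuous.continuousAt hW.continuous.continuousAt hflow hinit
  have hderiv : ∀ ε t,
      HasDerivAt (fun s => x ε s - (ε * s) • V x₀ - (ε ^ 2 / 2 * (s ^ 2 - s)) • W x₀)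
      (ε • (V (x ε t) - V x₀ - (ε * t) • W x₀) - (ε ^ 2 / 2) • (W (x ε t) - W x₀)) t := by
    intro ε t
    refine (((hflow ε t).sub (((hasDerivAt_id t).const_mul ε).smul_const (V x₀))).sub
      ((((hasDerivAt_pow 2 t).sub (hasDerivAt_id t)).const_mul (ε ^ 2 / 2)).smul_const
        (W x₀))).congr_deriv ?_
    simp only [modifiedField, mul_one, W]
    module
  have hderiv_isBigO :
      (fun p : ℝ × ℝ => p.1 • (V (x p.1 p.2) - V x₀ - (p.1 * p.2) • W x₀)
        - (p.1 ^ 2 / 2) • (W (x p.1 p.2) - W x₀))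
      =O[𝓝 0 ×ˢ 𝓟 (Icc 0 1)] fun p => p.1 ^ 3 :=
    (((isBigO_refl _ _).smul (isBigO_apply_modifiedFlow_sub_linear hV hflow hinit)).congr_right
        fun p => by simp only [smul_eq_mul]; ring).sub
      (((isBigO_div_const_self (fun p : ℝ × ℝ => p.1 ^ 2) 2).smul hW_near).congr_right
        fun p => by simp only [smul_eq_mul]; ring)
  refine (isBigO_sub_of_hasDerivAt_isBigO (g := (· ^ 3)) hderiv hderiv_isBigO).congr_left
    fun p => ?_
  simp only [hinit, W]
  module

end

/-- Backward error analysis: the time-1 flow of the modified vector field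
`εV - (ε²/2) DV·V` agrees with the Euler step `x₀ + εV(x₀)` up to `O(ε³)`. -/
theorem stmt_16 {p : ℕ} (V : EuclideanSpace ℝ (Fin p) → EuclideanSpace ℝ (Fin p))
    (hV : ContDiff ℝ 2 V) (x₀ : EuclideanSpace ℝ (Fin p))
    (x : ℝ → ℝ → EuclideanSpace ℝ (Fin p))
    (hflow : ∀ ε t, HasDerivAt (x ε)
      (ε • V (x ε t) - (ε ^ 2 / 2) • fderiv ℝ V (x ε t) (V (x ε t))) t)
    (hinit : ∀ ε, x ε 0 = x₀) :
    (fun ε : ℝ => x ε 1 - x₀ - ε • V x₀) =O[nhds 0] fun ε : ℝ => ε ^ 3 := by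
  have h_time_one : Tendsto (fun ε : ℝ => (ε, (1 : ℝ))) (𝓝 0) (𝓝 0 ×ˢ 𝓟 (Icc 0 1)) :=
    tendsto_id.prodMk <| tendsto_principal.2 <| .of_forall fun _ => right_mem_Icc.2 zero_le_one
  refine ((isBigO_modifiedFlow_sub_quadratic hV hflow hinit).comp_tendsto h_time_one).congr
    (fun ε => ?_) fun _ => rfl
  simp
end
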